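/- arXiv:math/9903103 — 6 statements merged into one kernel-verified Lean document; each statement's English description precedes it below -/
import Mathlib

section
/- Let (Ω, Σ, μ) be a finite measure space, X a Banach space, and let f : Ω → X belong to L̄₁(Ω, Σ, μ, X). Then there exists a partition Π of Ω such that for every finer partition Γ ≻ Π and every choice of sampling points T for Γ, the RL integral sum S(f, Γ, T) converges absolutely. -/
open MeasureTheory Set Pointwise

/-- A countable partition of `A` into pairwise disjoint measurable pieces
(possibly empty, so that finite partitions are included). -/
def IsRLPartition {Ω : Type*} [MeasurableSpace Ω] (A : Set Ω) (P : ℕ → Set Ω) : Prop :=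
  (∀ i, MeasurableSet (P i)) ∧ Pairwise (Function.onFun Disjoint P) ∧ (⋃ i, P i) = A

/-- `Γ` is finer than (inscribed into) `P`: every piece of `Γ` is contained in a piece of `P`. -/
def IsFinerPartition {Ω : Type*} (Γ P : ℕ → Set Ω) : Prop :=
  ∀ j, ∃ i, Γ j ⊆ P i

/-- `T` is a choice of sampling points for the partition `P`. -/
def IsSampling {Ω : Type*} (P : ℕ → Set Ω) (T : ℕ → Ω) : Prop :=
  ∀ i, (P i).Nonempty → T i ∈ P i

/-- The RL integral sum `S(f, P, T) = ∑ᵢ μ(Pᵢ) • f(Tᵢ)`. -/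
noncomputable def RLSum {Ω X : Type*} [MeasurableSpace Ω] [NormedAddCommGroup X]
    [NormedSpace ℝ X] (μ : Measure Ω) (f : Ω → X) (P : ℕ → Set Ω) (T : ℕ → Ω) : X :=
  ∑' i, (μ (P i)).toReal • f (T i)

/-- Absolute convergence of the RL integral sum. -/
def RLSumAbsConv {Ω X : Type*} [MeasurableSpace Ω] [NormedAddCommGroup X]
    (μ : Measure Ω) (f : Ω → X) (P : ℕ → Set Ω) (T : ℕ → Ω) : Prop :=
  Summable fun i => (μ (P i)).toReal * ‖f (T i)‖

/-- `f` is RL-integrable over `A` with RL integral `x`. -/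
def HasRLIntegral {Ω X : Type*} [MeasurableSpace Ω] [NormedAddCommGroup X] [NormedSpace ℝ X]
    (μ : Measure Ω) (f : Ω → X) (A : Set Ω) (x : X) : Prop :=
  ∀ ε > 0, ∃ P : ℕ → Set Ω, IsRLPartition A P ∧
    ∀ Γ : ℕ → Set Ω, IsRLPartition A Γ → IsFinerPartition Γ P →
      ∀ T : ℕ → Ω, IsSampling Γ T →
        RLSumAbsConv μ f Γ T ∧ ‖RLSum μ f Γ T - x‖ < ε

/-- `f` has a Lebesgue-integrable majorant, i.e. `f ∈ L̄₁(Ω, Σ, μ, X)`. -/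
def HasIntegrableMajorant {Ω X : Type*} [MeasurableSpace Ω] [NormedAddCommGroup X]
    (μ : Measure Ω) (f : Ω → X) : Prop :=
  ∃ g : Ω → ℝ, Integrable g μ ∧ ∀ t, ‖f t‖ ≤ g t

/-- The limit set `I(f)`: all limit points of the net of absolute RL integral sums. -/
def RLLimitSet {Ω X : Type*} [MeasurableSpace Ω] [NormedAddCommGroup X] [NormedSpace ℝ X]
    (μ : Measure Ω) (f : Ω → X) : Set X :=
  {x | ∀ ε > 0, ∀ P : ℕ → Set Ω, IsRLPartition Set.univ P →
    ∃ Γ : ℕ → Set Ω, IsRLPartition Set.univ Γ ∧ IsFinerPartition Γ P ∧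
      ∃ T : ℕ → Ω, IsSampling Γ T ∧ RLSumAbsConv μ f Γ T ∧ ‖RLSum μ f Γ T - x‖ < ε}

/-- `g` is a Bochner-integrable equivalent of `f`: `g` is Bochner integrable and the
RL integral of `f` over every measurable set equals the Bochner integral of `g` over it. -/
def BochnerEquivalent {Ω X : Type*} [MeasurableSpace Ω] [NormedAddCommGroup X] [NormedSpace ℝ X]
    (μ : Measure Ω) (f g : Ω → X) : Prop :=
  Integrable g μ ∧ ∀ A : Set Ω, MeasurableSet A → HasRLIntegral μ f A (∫ ω in A, g ω ∂μ)

/-- `f : [0,1] → X` is Riemann integrable with Riemann integral `x`. -/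
def HasRiemannIntegral {X : Type*} [NormedAddCommGroup X] [NormedSpace ℝ X]
    (f : ℝ → X) (x : X) : Prop :=
  ∀ ε > 0, ∃ δ > 0, ∀ (n : ℕ) (a : ℕ → ℝ) (t : ℕ → ℝ),
    a 0 = 0 → a n = 1 → (∀ i < n, a i ≤ a (i + 1)) →
    (∀ i < n, a (i + 1) - a i < δ) →
    (∀ i < n, t i ∈ Set.Icc (a i) (a (i + 1))) →
    ‖(∑ i ∈ Finset.range n, (a (i + 1) - a i) • f (t i)) - x‖ < ε

/-!
Replace the majorant by a measurable `ψ : Ω → ℝ≥0∞` with `‖f‖ₑ ≤ ψ` and finite integral, and cut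
`Ω` into the set `{ψ = ∞}` and the level sets `{n ≤ ψ < n + 1}`. On a piece `Γⱼ` of any finer
partition, `‖f(Tⱼ)‖ ≤ ψ + 1` throughout `Γⱼ`, so `μ(Γⱼ) ‖f(Tⱼ)‖ ≤ ∫_{Γⱼ} (ψ + 1) dμ`, and these
bounds sum to `∫ (ψ + 1) dμ < ∞`.
-/

open scoped ENNReal

section

variable {Ω : Type*}

noncomputable def levelIndex (ψ : Ω → ℝ≥0∞) (ω : Ω) : ℕ :=
  if ψ ω = ∞ then 0 else ⌊(ψ ω).toReal⌋₊ + 1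

theorem le_add_one_of_levelIndex_eq {ψ : Ω → ℝ≥0∞} {s t : Ω}
    (h : levelIndex ψ s = levelIndex ψ t) : ψ s ≤ ψ t + 1 := by
  by_cases ht : ψ t = ∞
  · simp [ht]
  by_cases hs : ψ s = ∞
  · simp [levelIndex, hs, ht] at h
  simp only [levelIndex, hs, ht, if_false, add_left_inj] at h
  rw [← ENNReal.ofReal_toReal hs, ← ENNReal.ofReal_toReal ht, ← ENNReal.ofReal_one,
    ← ENNReal.ofReal_add ENNReal.toReal_nonneg zero_le_one]
  refine ENNReal.ofReal_le_ofReal ?_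
  calc (ψ s).toReal ≤ ⌊(ψ s).toReal⌋₊ + 1 := (Nat.lt_floor_add_one _).le
    _ = ⌊(ψ t).toReal⌋₊ + 1 := by rw [h]
    _ ≤ (ψ t).toReal + 1 := by gcongr; exact Nat.floor_le ENNReal.toReal_nonneg

variable [MeasurableSpace Ω] {μ : Measure Ω}

theorem measurable_levelIndex {ψ : Ω → ℝ≥0∞} (hψ : Measurable ψ) :
    Measurable (levelIndex ψ) :=
  Measurable.ite (hψ (measurableSet_singleton ∞)) measurable_const
    (hψ.ennreal_toReal.nat_floor.add_const 1)

theorem isRLPartition_preimage_singleton {κ : Ω → ℕ} (hκ : Measurable κ) :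
    IsRLPartition univ fun i => κ ⁻¹' {i} :=
  ⟨fun _ => hκ (measurableSet_singleton _),
    fun _ _ hij => Disjoint.preimage κ (disjoint_singleton.2 hij),
    by rw [← preimage_iUnion, iUnion_of_singleton, preimage_univ]⟩

open scoped Classical in
theorem AEMeasurable.exists_measurable_ge_ae_eq {φ : Ω → ℝ≥0∞} (hφ : AEMeasurable φ μ) :
    ∃ ψ : Ω → ℝ≥0∞, Measurable ψ ∧ φ ≤ ψ ∧ ψ =ᵐ[μ] φ := by
  set N := toMeasurable μ {x | φ x ≠ hφ.mk φ x}
  have hN : μ N = 0 := by rw [measure_toMeasurable]; exact hφ.ae_eq_mk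
  refine ⟨N.piecewise ⊤ (hφ.mk φ),
    measurable_const.piecewise (measurableSet_toMeasurable _ _) hφ.measurable_mk, fun x => ?_, ?_⟩
  · by_cases hx : x ∈ N
    · simp [hx]
    · have hφx : φ x = hφ.mk φ x := not_not.1 fun h => hx (subset_toMeasurable _ _ h)
      simp [hx, hφx]
  · have hψ : N.piecewise ⊤ (hφ.mk φ) =ᵐ[μ] hφ.mk φ :=
      (measure_eq_zero_iff_ae_notMem.1 hN).mono fun x hx => by simp [hx]
    exact hψ.trans hφ.ae_eq_mk.symm

theorem HasIntegrableMajorant.exists_measurable_enorm_le {X : Type*} [NormedAddCommGroup X]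
    {f : Ω → X} (hf : HasIntegrableMajorant μ f) :
    ∃ ψ : Ω → ℝ≥0∞, Measurable ψ ∧ (∀ t, ‖f t‖ₑ ≤ ψ t) ∧ ∫⁻ t, ψ t ∂μ ≠ ∞ := by
  obtain ⟨g, hg, hfg⟩ := hf
  obtain ⟨ψ, hψ, hgψ, hψg⟩ := hg.aemeasurable.ennreal_ofReal.exists_measurable_ge_ae_eq
  refine ⟨ψ, hψ, fun t => ?_, ?_⟩
  · rw [← ofReal_norm]
    exact (ENNReal.ofReal_le_ofReal (hfg t)).trans (hgψ t)
  · rw [lintegral_congr_ae hψg]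
    exact hg.lintegral_lt_top.ne

theorem rlSumAbsConv_of_enorm_mul_le_setLIntegral {X : Type*} [NormedAddCommGroup X]
    {f : Ω → X} {A : Set Ω} {Γ : ℕ → Set Ω} {T : ℕ → Ω} {H : Ω → ℝ≥0∞}
    (hΓ : IsRLPartition A Γ) (hH : ∫⁻ ω in A, H ω ∂μ ≠ ∞)
    (hle : ∀ j, ‖f (T j)‖ₑ * μ (Γ j) ≤ ∫⁻ ω in Γ j, H ω ∂μ) : RLSumAbsConv μ f Γ T := by
  have hsum : ∑' j, ‖f (T j)‖ₑ * μ (Γ j) ≠ ∞ := by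
    refine ne_top_of_le_ne_top hH ((ENNReal.tsum_le_tsum hle).trans_eq ?_)
    rw [← hΓ.2.2, lintegral_iUnion hΓ.1 hΓ.2.1]
  simpa [RLSumAbsConv, ENNReal.toReal_mul, mul_comm] using ENNReal.summable_toReal hsum

end

theorem exists_partition_absolutely_convergent_general
    {Ω X : Type*} [MeasurableSpace Ω] [NormedAddCommGroup X]
    (μ : Measure Ω) [IsFiniteMeasure μ] (f : Ω → X) (hf : HasIntegrableMajorant μ f) :
    ∃ P : ℕ → Set Ω, IsRLPartition Set.univ P ∧
      ∀ Γ : ℕ → Set Ω, IsRLPartition Set.univ Γ → IsFinerPartition Γ P →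
        ∀ T : ℕ → Ω, IsSampling Γ T → RLSumAbsConv μ f Γ T := by
  obtain ⟨ψ, hψ, hfψ, hψint⟩ := hf.exists_measurable_enorm_le
  refine ⟨fun i => levelIndex ψ ⁻¹' {i},
    isRLPartition_preimage_singleton (measurable_levelIndex hψ), fun Γ hΓ hfine T hT => ?_⟩
  have hint : ∫⁻ ω in univ, ψ ω + 1 ∂μ ≠ ∞ := by
    rw [Measure.restrict_univ, lintegral_add_right _ measurable_const, lintegral_one]
    exact ENNReal.add_ne_top.2 ⟨hψint, measure_ne_top μ univ⟩
  refine rlSumAbsConv_of_enorm_mul_le_setLIntegral hΓ hint fun j => ?_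
  rcases (Γ j).eq_empty_or_nonempty with hempty | hne
  · simp [hempty]
  obtain ⟨i, hsub⟩ := hfine j
  have hTj : levelIndex ψ (T j) = i := hsub (hT j hne)
  rw [← setLIntegral_const]
  exact setLIntegral_mono' (hΓ.1 j) fun s hs =>
    (hfψ (T j)).trans (le_add_one_of_levelIndex_eq (hTj.trans (hsub hs).symm))

/-- If `f ∈ L̄₁(Ω, Σ, μ, X)`, then there is a partition `P` of `Ω` such that for
every finer partition `Γ ≻ P` and every choice of sampling points `T`, the RL integral sum
`S(f, Γ, T)` converges absolutely. -/
theorem exists_partition_absolutely_convergent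
    {Ω X : Type*} [MeasurableSpace Ω] [NormedAddCommGroup X] [NormedSpace ℝ X] [CompleteSpace X]
    (μ : Measure Ω) [IsFiniteMeasure μ] (f : Ω → X) (hf : HasIntegrableMajorant μ f) :
    ∃ P : ℕ → Set Ω, IsRLPartition Set.univ P ∧
      ∀ Γ : ℕ → Set Ω, IsRLPartition Set.univ Γ → IsFinerPartition Γ P →
        ∀ T : ℕ → Ω, IsSampling Γ T → RLSumAbsConv μ f Γ T :=
  exists_partition_absolutely_convergent_general μ f hf
end

section
/- Let (Ω, Σ, μ) be a finite measure space, X a Banach space, f ∈ L̄₁(Ω, Σ, μ, X) with integrable majorant g ∈ L₁(Ω, Σ, μ). Let Π = {Δ_i} be a partition of Ω for which the upper integral sum of g is absolutely convergent, i.e. Σ_i (sup_{t ∈ Δ_i} g(t)) · μ(Δ_i) < ∞. Then for any finer partition Γ ≻ Π, the set {S(f, Γ, T) : T any choice of sampling points for Γ} is contained in the closed convex hull of {S(f, Π, T) : T any choice of sampling points for Π}. -/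
open MeasureTheory Set Pointwise

/-!
By Hahn–Banach it suffices to find, for every continuous functional `φ`, a sum `S(f, Π, T')`
with `φ (S(f, Π, T')) ≤ φ (S(f, Γ, T))`. Grouping the pieces `Γⱼ` by the piece `Πᵢ` containing
them splits the real series `φ (S(f, Γ, T)) = ∑ⱼ μ(Γⱼ) φ(f(tⱼ))` into blocks with weights summing
to `μ(Πᵢ)`. A weighted average is at least its smallest term, so each block with `μ(Πᵢ) > 0`
contains a sample `tⱼ ∈ Πᵢ` with `μ(Πᵢ) φ(f(tⱼ))` at most the block sum; these samples give `T'`.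
The convergent upper sum of the majorant makes every series involved absolutely convergent.
-/

theorem mem_closure_convexHull_of_forall_exists_le {E : Type*} [TopologicalSpace E]
    [AddCommGroup E] [Module ℝ E] [IsTopologicalAddGroup E] [ContinuousSMul ℝ E]
    [LocallyConvexSpace ℝ E] {s : Set E} {x : E}
    (h : ∀ φ : StrongDual ℝ E, ∃ y ∈ s, φ y ≤ φ x) : x ∈ closure (convexHull ℝ s) := by
  by_contra hx
  obtain ⟨φ, u, hxu, hu⟩ :=
    geometric_hahn_banach_point_closed (convex_convexHull ℝ s).closure isClosed_closure hx
  obtain ⟨y, hy, hyx⟩ := h φ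
  linarith [hu y (subset_closure (subset_convexHull ℝ s hy))]

theorem exists_ne_zero_mul_le_tsum_mul {ι : Type*} {w v : ι → ℝ} {a : ℝ} (hw : ∀ j, 0 ≤ w j)
    (ha : HasSum w a) (ha0 : a ≠ 0) (hwv : Summable fun j => w j * v j) :
    ∃ j, w j ≠ 0 ∧ a * v j ≤ ∑' j, w j * v j := by
  have hapos : 0 < a := (ha.nonneg hw).lt_of_ne' ha0
  obtain ⟨j₀, hj₀⟩ : ∃ j, w j ≠ 0 := by
    by_contra! h
    exact ha0 (ha.unique (by rw [show w = 0 from funext h]; exact hasSum_zero))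
  by_contra! hlt
  set m := (∑' j, w j * v j) / a
  have hm : ∀ j, w j ≠ 0 → m < v j := fun j hj => (div_lt_iff₀' hapos).2 (hlt j hj)
  have hle : ∀ j, w j * m ≤ w j * v j := fun j => by
    rcases eq_or_ne (w j) 0 with h | h
    · simp [h]
    · exact mul_le_mul_of_nonneg_left (hm j h).le (hw j)
  have hcontra := hasSum_lt hle (mul_lt_mul_of_pos_left (hm j₀ hj₀) ((hw j₀).lt_of_ne' hj₀))
    (ha.mul_right m) hwv.hasSum
  rw [mul_div_cancel₀ _ ha0] at hcontra
  exact hcontra.false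

section Fiber

variable {Ω : Type*} {P Γ : ℕ → Set Ω} {c : ℕ → ℕ}

theorem iUnion_fiber_eq_of_subset (hΓ : ⋃ j, Γ j = univ)
    (hP : Pairwise (Function.onFun Disjoint P)) (hc : ∀ j, Γ j ⊆ P (c j)) (i : ℕ) :
    ⋃ j : c ⁻¹' {i}, Γ j = P i := by
  refine Subset.antisymm (iUnion_subset fun ⟨j, hj⟩ => ?_) fun ω hω => ?_
  · obtain rfl : c j = i := hj
    exact hc j
  obtain ⟨j, hj⟩ := mem_iUnion.1 (hΓ ▸ mem_univ ω : ω ∈ ⋃ j, Γ j)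
  have hji : c j = i := by
    by_contra hne
    exact (hP hne).le_bot ⟨hc j hj, hω⟩
  exact mem_iUnion.2 ⟨⟨j, hji⟩, hj⟩

variable [MeasurableSpace Ω] {μ : Measure Ω} [IsFiniteMeasure μ]

theorem hasSum_measure_toReal_fiber (hΓ : IsRLPartition univ Γ)
    (hP : Pairwise (Function.onFun Disjoint P)) (hc : ∀ j, Γ j ⊆ P (c j)) (i : ℕ) :
    HasSum (fun j : c ⁻¹' {i} => (μ (Γ j)).toReal) (μ (P i)).toReal := by
  obtain ⟨hΓm, hΓd, hΓu⟩ := hΓ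
  have h := measure_iUnion (μ := μ) (f := fun j : c ⁻¹' {i} => Γ j)
    (fun j k hjk => hΓd (Subtype.coe_injective.ne hjk)) (fun j => hΓm j)
  rw [iUnion_fiber_eq_of_subset hΓu hP hc i] at h
  have hne : ∑' j : c ⁻¹' {i}, μ (Γ j) ≠ ⊤ := h ▸ measure_ne_top μ (P i)
  rw [h, ENNReal.tsum_toReal_eq fun _ => measure_ne_top μ _]
  exact ENNReal.hasSum_toReal hne

theorem summable_comp_mul_measure_toReal_of_subset (hΓ : IsRLPartition univ Γ)
    (hP : Pairwise (Function.onFun Disjoint P)) (hc : ∀ j, Γ j ⊆ P (c j)) {b : ℕ → ℝ}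
    (hb0 : ∀ i, (P i).Nonempty → 0 ≤ b i) (hb : Summable fun i => b i * (μ (P i)).toReal) :
    Summable fun j => b (c j) * (μ (Γ j)).toReal := by
  have hnonneg : 0 ≤ fun j => b (c j) * (μ (Γ j)).toReal := fun j => by
    rcases (Γ j).eq_empty_or_nonempty with h | h
    · simp [h]
    · exact mul_nonneg (hb0 _ (h.mono (hc j))) ENNReal.toReal_nonneg
  have hfiber (i : ℕ) : HasSum (fun j : c ⁻¹' {i} => b (c j) * (μ (Γ j)).toReal)
      (b i * (μ (P i)).toReal) := by
    have hci : ∀ j : c ⁻¹' {i}, c j = i := fun j => j.2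
    simpa only [hci] using (hasSum_measure_toReal_fiber (μ := μ) hΓ hP hc i).mul_left (b i)
  refine (summable_partition hnonneg (s := fun i => c ⁻¹' {i})
    fun j => ⟨c j, rfl, fun i hi => hi.symm⟩).2 ⟨fun i => (hfiber i).summable, ?_⟩
  exact hb.congr fun i => (hfiber i).tsum_eq.symm

theorem exists_sample_measure_mul_le_tsum_fiber (hΓ : IsRLPartition univ Γ)
    (hP : Pairwise (Function.onFun Disjoint P)) (hc : ∀ j, Γ j ⊆ P (c j)) {T : ℕ → Ω}
    (hT : IsSampling Γ T) {v : Ω → ℝ} (i : ℕ)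
    (hv : Summable fun j : c ⁻¹' {i} => (μ (Γ j)).toReal * v (T j)) :
    ∃ t, ((P i).Nonempty → t ∈ P i) ∧
      (μ (P i)).toReal * v t ≤ ∑' j : c ⁻¹' {i}, (μ (Γ j)).toReal * v (T j) := by
  have hw := hasSum_measure_toReal_fiber (μ := μ) hΓ hP hc i
  rcases eq_or_ne (μ (P i)).toReal 0 with h0 | h0
  · have hzero : ∀ j : c ⁻¹' {i}, (μ (Γ j)).toReal = 0 :=
      congrFun ((hasSum_zero_iff_of_nonneg fun _ => ENNReal.toReal_nonneg).1 (h0 ▸ hw))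
    obtain ⟨t, ht⟩ : ∃ t, (P i).Nonempty → t ∈ P i := by
      rcases (P i).eq_empty_or_nonempty with h | ⟨t, ht⟩
      · exact ⟨T 0, by simp [h]⟩
      · exact ⟨t, fun _ => ht⟩
    refine ⟨t, ht, ?_⟩
    simp only [h0, hzero, zero_mul, tsum_zero, le_refl]
  · obtain ⟨j, hj, hle⟩ :=
      exists_ne_zero_mul_le_tsum_mul (fun _ => ENNReal.toReal_nonneg) hw h0 hv
    have hne : (Γ j).Nonempty :=
      nonempty_of_measure_ne_zero fun h => hj (by rw [h, ENNReal.toReal_zero])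
    obtain ⟨j, rfl : c j = i⟩ := j
    exact ⟨T j, fun _ => hc j (hT j hne), hle⟩

end Fiber

section RLSum

variable {Ω X Y : Type*} [MeasurableSpace Ω] [NormedAddCommGroup X] {μ : Measure Ω}
  {f : Ω → X} {Q : ℕ → Set Ω} {T : ℕ → Ω}

theorem rlSumAbsConv_of_forall_norm_le (hT : IsSampling Q T) {b : ℕ → ℝ}
    (hb : ∀ i, ∀ t ∈ Q i, ‖f t‖ ≤ b i) (hsum : Summable fun i => b i * (μ (Q i)).toReal) :
    RLSumAbsConv μ f Q T := by
  refine hsum.of_nonneg_of_le (fun i => mul_nonneg ENNReal.toReal_nonneg (norm_nonneg _))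
    fun i => ?_
  rcases (Q i).eq_empty_or_nonempty with h | h
  · simp [h]
  · rw [mul_comm]
    exact mul_le_mul_of_nonneg_right (hb i _ (hT i h)) ENNReal.toReal_nonneg

variable [NormedSpace ℝ X] [NormedAddCommGroup Y] [NormedSpace ℝ Y]

theorem RLSumAbsConv.summable [CompleteSpace X] (h : RLSumAbsConv μ f Q T) :
    Summable fun i => (μ (Q i)).toReal • f (T i) :=
  Summable.of_norm <| Summable.congr h fun i => by
    rw [norm_smul, Real.norm_of_nonneg ENNReal.toReal_nonneg]

theorem RLSumAbsConv.clm_comp (h : RLSumAbsConv μ f Q T) (φ : X →L[ℝ] Y) :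
    RLSumAbsConv μ (fun t => φ (f t)) Q T := by
  refine (Summable.mul_left ‖φ‖ h).of_nonneg_of_le (fun i => by positivity) fun i => ?_
  calc (μ (Q i)).toReal * ‖φ (f (T i))‖
      ≤ (μ (Q i)).toReal * (‖φ‖ * ‖f (T i)‖) :=
        mul_le_mul_of_nonneg_left (φ.le_opNorm _) ENNReal.toReal_nonneg
    _ = ‖φ‖ * ((μ (Q i)).toReal * ‖f (T i)‖) := by ring

theorem RLSumAbsConv.map_rlSum [CompleteSpace X] (h : RLSumAbsConv μ f Q T) (φ : X →L[ℝ] Y) :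
    φ (RLSum μ f Q T) = RLSum μ (fun t => φ (f t)) Q T := by
  simp only [RLSum, φ.map_tsum h.summable, map_smul]

end RLSum

theorem finer_sums_subset_closure_convexHull_general
    {Ω X : Type*} [MeasurableSpace Ω] [NormedAddCommGroup X] [NormedSpace ℝ X] [CompleteSpace X]
    (μ : Measure Ω) [IsFiniteMeasure μ] (f : Ω → X) (g : Ω → ℝ)
    (hmaj : ∀ t, ‖f t‖ ≤ g t)
    (P : ℕ → Set Ω) (hP : IsRLPartition Set.univ P)
    (hupper : ∃ M : ℕ → ℝ, (∀ i, ∀ t ∈ P i, g t ≤ M i) ∧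
      Summable fun i => M i * (μ (P i)).toReal)
    (Γ : ℕ → Set Ω) (hΓ : IsRLPartition Set.univ Γ) (hfiner : IsFinerPartition Γ P) :
    {x : X | ∃ T : ℕ → Ω, IsSampling Γ T ∧ x = RLSum μ f Γ T} ⊆
      closure (convexHull ℝ {x : X | ∃ T : ℕ → Ω, IsSampling P T ∧ x = RLSum μ f P T}) := by
  rintro _ ⟨T, hT, rfl⟩
  obtain ⟨M, hM, hMsum⟩ := hupper
  choose c hc using hfiner
  have hfM : ∀ i, ∀ t ∈ P i, ‖f t‖ ≤ M i := fun i t ht => (hmaj t).trans (hM i t ht)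
  have hΓconv : RLSumAbsConv μ f Γ T :=
    rlSumAbsConv_of_forall_norm_le hT (fun j t ht => hfM (c j) t (hc j ht))
      (summable_comp_mul_measure_toReal_of_subset hΓ hP.2.1 hc
        (fun i ⟨t, ht⟩ => (norm_nonneg _).trans (hfM i t ht)) hMsum)
  refine mem_closure_convexHull_of_forall_exists_le fun φ => ?_
  have hφΓ : Summable fun j => (μ (Γ j)).toReal * φ (f (T j)) := (hΓconv.clm_comp φ).summable
  choose T' hT' hT'le using fun i => exists_sample_measure_mul_le_tsum_fiber hΓ hP.2.1 hc hT
    (v := fun t => φ (f t)) i (hφΓ.subtype _)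
  have hPconv : RLSumAbsConv μ f P T' := rlSumAbsConv_of_forall_norm_le hT' hfM hMsum
  refine ⟨_, ⟨T', hT', rfl⟩, ?_⟩
  rw [hPconv.map_rlSum, hΓconv.map_rlSum]
  exact hasSum_le hT'le (hPconv.clm_comp φ).summable.hasSum (hφΓ.hasSum.tsum_fiberwise c)

/-- Let `f ∈ L̄₁` with integrable majorant `g`, and let `P` be a partition of `Ω`
for which the upper integral sum of `g` converges absolutely (expressed via termwise upper
bounds `M i ≥ sup_{t ∈ P i} g t` with `∑ M i · μ(P i)` convergent). Then for any finer
partition `Γ ≻ P`, every RL integral sum of `f` over `Γ` lies in the closed convex hull of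
the set of RL integral sums of `f` over `P`. -/
theorem finer_sums_subset_closure_convexHull
    {Ω X : Type*} [MeasurableSpace Ω] [NormedAddCommGroup X] [NormedSpace ℝ X] [CompleteSpace X]
    (μ : Measure Ω) [IsFiniteMeasure μ] (f : Ω → X) (g : Ω → ℝ)
    (hg : Integrable g μ) (hmaj : ∀ t, ‖f t‖ ≤ g t)
    (P : ℕ → Set Ω) (hP : IsRLPartition Set.univ P)
    (hupper : ∃ M : ℕ → ℝ, (∀ i, ∀ t ∈ P i, g t ≤ M i) ∧
      Summable fun i => M i * (μ (P i)).toReal)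
    (Γ : ℕ → Set Ω) (hΓ : IsRLPartition Set.univ Γ) (hfiner : IsFinerPartition Γ P) :
    {x : X | ∃ T : ℕ → Ω, IsSampling Γ T ∧ x = RLSum μ f Γ T} ⊆
      closure (convexHull ℝ {x : X | ∃ T : ℕ → Ω, IsSampling P T ∧ x = RLSum μ f P T}) :=
  finer_sums_subset_closure_convexHull_general μ f g hmaj P hP hupper Γ hΓ hfiner
end

section
/- Let X be a Banach space and let f : [0,1] → X be a bounded function that is Riemann integrable with Riemann integral x ∈ X. Then, with respect to Lebesgue measure on [0,1], f is RL-integrable and its RL integral equals x. -/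
open MeasureTheory Set Pointwise

open Filter in
lemma tsum_mem_closure_convexHull {X : Type*} [NormedAddCommGroup X] [NormedSpace ℝ X]
    {ι : Type*} {S : Set X} {p : ι → ℝ} {z : ι → X} {M : ℝ}
    (hp0 : ∀ j, 0 ≤ p j) (hps : Summable p) (hp1 : ∑' j, p j = 1)
    (hz : ∀ j, p j ≠ 0 → z j ∈ S) (hzM : ∀ j, p j ≠ 0 → ‖z j‖ ≤ M)
    (hzs : Summable fun j => p j • z j) :
    (∑' j, p j • z j) ∈ closure (convexHull ℝ S) := by
  have hM : 0 ≤ M := by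
    by_contra h
    push_neg at h
    have hall : ∀ j, p j = 0 := by
      intro j
      by_contra hj
      exact absurd (le_trans (norm_nonneg _) (hzM j hj)) (not_le.mpr h)
    rw [tsum_congr hall, tsum_zero] at hp1
    norm_num at hp1
  rw [Metric.mem_closure_iff]
  intro ε hε
  have hεM : 0 < ε / (2 * (M + 1)) := by positivity
  have h1 : ∀ᶠ F : Finset ι in atTop,
      dist (∑ j ∈ F, p j • z j) (∑' j, p j • z j) < ε / 2 := by
    have h := hzs.hasSum
    rw [HasSum] at h
    exact Metric.tendsto_nhds.mp h (ε / 2) (by linarith)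
  have h2 : ∀ᶠ F : Finset ι in atTop,
      dist (∑ j ∈ F, p j) 1 < min (1/2) (ε / (2 * (M + 1))) := by
    have h := hps.hasSum
    rw [hp1, HasSum] at h
    exact Metric.tendsto_nhds.mp h _ (lt_min (by norm_num) hεM)
  obtain ⟨F, hF1, hF2⟩ := (h1.and h2).exists
  set F' := F.filter fun j => p j ≠ 0 with hF'
  have hz1 : ∑ j ∈ F', p j • z j = ∑ j ∈ F, p j • z j :=
    Finset.sum_filter_of_ne (fun j _ h hp => h (by rw [hp, zero_smul]))
  have hz2 : ∑ j ∈ F', p j = ∑ j ∈ F, p j :=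
    Finset.sum_filter_of_ne (fun j _ h hp => h hp)
  set s := ∑ j ∈ F', p j with hs
  have hdist : |s - 1| < min (1/2) (ε / (2 * (M + 1))) := by
    rw [← hz2] at hF2
    simpa [Real.dist_eq] using hF2
  have hs_half : 1/2 < s := by
    have := abs_lt.mp (lt_of_lt_of_le hdist (min_le_left _ _))
    linarith [this.1]
  have hs_pos : 0 < s := by linarith
  have hs_le1 : s ≤ 1 := by
    rw [hs, ← hp1]
    exact Summable.sum_le_tsum F' (fun j _ => hp0 j) hps
  refine ⟨∑ j ∈ F', (s⁻¹ * p j) • z j, ?_, ?_⟩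
  · refine (convex_convexHull ℝ S).sum_mem (fun j _ => mul_nonneg (inv_nonneg.mpr hs_pos.le) (hp0 j)) ?_ ?_
    · rw [← Finset.mul_sum, ← hs, inv_mul_cancel₀ hs_pos.ne']
    · intro j hj
      exact subset_convexHull ℝ S (hz j (Finset.mem_filter.mp hj).2)
  · have key : ∑ j ∈ F', (s⁻¹ * p j) • z j = s⁻¹ • ∑ j ∈ F', p j • z j := by
      rw [Finset.smul_sum]
      exact Finset.sum_congr rfl fun j _ => (smul_smul _ _ _).symm
    have hnorm : ‖∑ j ∈ F', p j • z j‖ ≤ s * M := by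
      calc ‖∑ j ∈ F', p j • z j‖ ≤ ∑ j ∈ F', ‖p j • z j‖ := norm_sum_le _ _
        _ ≤ ∑ j ∈ F', p j * M := by
            refine Finset.sum_le_sum fun j hj => ?_
            rw [norm_smul, Real.norm_eq_abs, abs_of_nonneg (hp0 j)]
            exact mul_le_mul_of_nonneg_left (hzM j (Finset.mem_filter.mp hj).2) (hp0 j)
        _ = s * M := by rw [← Finset.sum_mul]
    have hd2 : dist (∑ j ∈ F, p j • z j) (∑ j ∈ F', (s⁻¹ * p j) • z j) ≤ (1 - s) * M := by
      rw [key, ← hz1, dist_eq_norm]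
      have : ∑ j ∈ F', p j • z j - s⁻¹ • ∑ j ∈ F', p j • z j
          = (1 - s⁻¹) • ∑ j ∈ F', p j • z j := by
        rw [sub_smul, one_smul]
      rw [this, norm_smul, Real.norm_eq_abs]
      have hinv1 : 1 ≤ s⁻¹ := one_le_inv₀ hs_pos |>.mpr hs_le1
      have habs : |1 - s⁻¹| = s⁻¹ - 1 := by
        rw [abs_of_nonpos (by linarith)]; ring
      rw [habs]
      calc (s⁻¹ - 1) * ‖∑ j ∈ F', p j • z j‖ ≤ (s⁻¹ - 1) * (s * M) := by
            exact mul_le_mul_of_nonneg_left hnorm (by linarith)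
        _ = (1 - s) * M := by field_simp
    have hlast : (1 - s) * M < ε / 2 := by
      have h1s : 1 - s < ε / (2 * (M + 1)) := by
        have := abs_lt.mp (lt_of_lt_of_le hdist (min_le_right _ _))
        linarith [this.1]
      have : (1 - s) * M ≤ (1 - s) * (M + 1) := by nlinarith
      have h2' : (1 - s) * (M + 1) < (ε / (2 * (M + 1))) * (M + 1) := by
        exact mul_lt_mul_of_pos_right h1s (by linarith)
      have h3' : (ε / (2 * (M + 1))) * (M + 1) = ε / 2 := by field_simp
      linarith
    calc dist (∑' j, p j • z j) (∑ j ∈ F', (s⁻¹ * p j) • z j)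
        ≤ dist (∑' j, p j • z j) (∑ j ∈ F, p j • z j)
          + dist (∑ j ∈ F, p j • z j) (∑ j ∈ F', (s⁻¹ * p j) • z j) := dist_triangle _ _ _
      _ < ε / 2 + ε / 2 := by
          refine add_lt_add_of_lt_of_le ?_ (le_trans hd2 hlast.le)
          · rw [dist_comm]; exact hF1
      _ = ε := by ring

lemma sum_closure_convexHull_bound {X : Type*} [NormedAddCommGroup X] [NormedSpace ℝ X]
    (n : ℕ) (S : ℕ → Set X) (x : X) (ε : ℝ)
    (h : ∀ d : ℕ → X, (∀ i, i < n → d i ∈ S i) → ‖(∑ i ∈ Finset.range n, d i) - x‖ ≤ ε)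
    (v : ℕ → X) (hv : ∀ i, i < n → v i ∈ closure (convexHull ℝ (S i))) :
    ‖(∑ i ∈ Finset.range n, v i) - x‖ ≤ ε := by
  suffices H : ∀ m, ∀ u : ℕ → X, (∀ i, i < m → u i ∈ closure (convexHull ℝ (S i))) →
      (∀ i, m ≤ i → i < n → u i ∈ S i) → ‖(∑ i ∈ Finset.range n, u i) - x‖ ≤ ε by
    exact H n v hv (fun i h1 h2 => absurd h1 (not_le.mpr h2))
  intro m
  induction m with
  | zero => exact fun u _ h2 => h u (fun i hi => h2 i (Nat.zero_le i) hi)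
  | succ m ih =>
    intro u h1 h2
    by_cases hm : m < n
    · set c : X := (∑ i ∈ Finset.range n, u i) - u m with hc
      have hsum_upd : ∀ y : X,
          ∑ i ∈ Finset.range n, Function.update u m y i = y + c := by
        intro y
        rw [Finset.sum_update_of_mem (Finset.mem_range.mpr hm), hc]
        congr 1
        rw [Finset.sum_sdiff_eq_sub (Finset.singleton_subset_iff.mpr (Finset.mem_range.mpr hm)),
          Finset.sum_singleton]
      have key : S m ⊆ Metric.closedBall (x - c) ε := by
        intro d hd
        have := ih (Function.update u m d)
          (fun i hi => by
            rw [Function.update_of_ne (by omega)]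
            exact h1 i (by omega))
          (fun i hi1 hi2 => by
            rcases eq_or_lt_of_le hi1 with hh | hh
            · rw [← hh, Function.update_self]; exact hd
            · rw [Function.update_of_ne (by omega)]
              exact h2 i (by omega) hi2)
        rw [hsum_upd d] at this
        rw [Metric.mem_closedBall, dist_eq_norm]
        calc ‖d - (x - c)‖ = ‖d + c - x‖ := by congr 1; abel
          _ ≤ ε := this
      have hmem : u m ∈ Metric.closedBall (x - c) ε :=
        closure_minimal (convexHull_min key (convex_closedBall _ _))
          Metric.isClosed_closedBall (h1 m (by omega))
      rw [Metric.mem_closedBall, dist_eq_norm] at hmem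
      calc ‖(∑ i ∈ Finset.range n, u i) - x‖ = ‖u m - (x - c)‖ := by
            rw [hc]; congr 1; abel
        _ ≤ ε := hmem
    · exact ih u (fun i hi => h1 i (by omega)) (fun i hi1 hi2 => absurd hi2 (by omega))

/-- A bounded Riemann integrable function `f : [0,1] → X` with Riemann integral
`x` is RL-integrable over `[0,1]` (w.r.t. Lebesgue measure) with RL integral `x`. -/
theorem hasRLIntegral_of_riemann
    {X : Type*} [NormedAddCommGroup X] [NormedSpace ℝ X] [CompleteSpace X]
    (f : ℝ → X) (C : ℝ) (hbdd : ∀ t ∈ Set.Icc (0:ℝ) 1, ‖f t‖ ≤ C)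
    (x : X) (hR : HasRiemannIntegral f x) :
    HasRLIntegral (volume : Measure ℝ) f (Set.Icc (0:ℝ) 1) x := by
  intro ε hε
  obtain ⟨δ, hδ, hRie⟩ := hR (ε/2) (by linarith)
  obtain ⟨n, hn⟩ := exists_nat_gt (1/δ)
  have hn0 : 0 < n := by
    rcases Nat.eq_zero_or_pos n with h | h
    · exfalso
      rw [h, Nat.cast_zero] at hn
      have : (0:ℝ) < 1/δ := by positivity
      linarith
    · exact h
  have hnR : (0:ℝ) < n := Nat.cast_pos.mpr hn0
  have hmesh : (n:ℝ)⁻¹ < δ := by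
    rw [div_lt_iff₀ hδ] at hn
    rw [inv_eq_one_div, div_lt_iff₀ hnR]
    nlinarith
  set a : ℕ → ℝ := fun i => (i:ℝ)/n with ha
  set P : ℕ → Set ℝ := fun i =>
    if i + 1 < n then Set.Ico (a i) (a (i+1))
    else if i + 1 = n then Set.Icc (a i) 1 else ∅ with hP
  have ha_mono : ∀ i j : ℕ, i ≤ j → a i ≤ a j := by
    intro i j hij
    rw [ha]
    dsimp only
    gcongr <;> exact_mod_cast hij
  have ha_0 : ∀ i, 0 ≤ a i := fun i => by rw [ha]; positivity
  have ha_le1 : ∀ i, i ≤ n → a i ≤ 1 := by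
    intro i h
    rw [ha]
    dsimp only
    rw [div_le_one hnR]
    exact_mod_cast h
  have haN : a n = 1 := by rw [ha]; exact div_self hnR.ne'
  have hgap : ∀ i : ℕ, a (i+1) - a i = (n:ℝ)⁻¹ := by
    intro i
    rw [ha]
    dsimp only
    push_cast
    rw [div_sub_div_same, add_sub_cancel_left, one_div]
  have hPsub : ∀ i, i + 1 ≤ n → P i ⊆ Set.Icc (a i) (a (i+1)) := by
    intro i hi t ht
    rw [hP] at ht
    dsimp only at ht
    by_cases h1 : i + 1 < n
    · rw [if_pos h1] at ht
      exact Set.Ico_subset_Icc_self ht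
    · have h2 : i + 1 = n := by omega
      rw [if_neg h1, if_pos h2] at ht
      have : a (i+1) = 1 := by rw [h2, haN]
      rw [this]
      exact ht
  have hP01 : ∀ i, P i ⊆ Set.Icc 0 1 := by
    intro i t ht
    by_cases h : i + 1 ≤ n
    · have h' := hPsub i h ht
      exact ⟨le_trans (ha_0 i) h'.1, le_trans h'.2 (ha_le1 (i+1) h)⟩
    · rw [hP] at ht
      dsimp only at ht
      rw [if_neg (by omega), if_neg (by omega)] at ht
      exact absurd ht (Set.notMem_empty t)
  have hPmeas : ∀ i, MeasurableSet (P i) := by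
    intro i
    rw [hP]
    dsimp only
    split_ifs
    · exact measurableSet_Ico
    · exact measurableSet_Icc
    · exact MeasurableSet.empty
  have hPlow : ∀ i t, t ∈ P i → a i ≤ t := by
    intro i t ht
    rw [hP] at ht
    dsimp only at ht
    split_ifs at ht
    · exact ht.1
    · exact ht.1
    · exact absurd ht (Set.notMem_empty t)
  have hPdisj0 : ∀ i j, i < j → Disjoint (P i) (P j) := by
    intro i j hij
    rw [Set.disjoint_left]
    intro t hti htj
    by_cases h1 : i + 1 < n
    · rw [hP] at hti
      dsimp only at hti
      rw [if_pos h1] at hti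
      have h2 : a j ≤ t := hPlow j t htj
      have h3 : a (i+1) ≤ a j := ha_mono _ _ (by omega)
      exact absurd hti.2 (not_lt.mpr (le_trans h3 h2))
    · by_cases h2 : i + 1 = n
      · rw [hP] at htj
        dsimp only at htj
        rw [if_neg (by omega), if_neg (by omega)] at htj
        exact htj
      · rw [hP] at hti
        dsimp only at hti
        rw [if_neg h1, if_neg h2] at hti
        exact hti
  have hPdisj : Pairwise (Function.onFun Disjoint P) := by
    intro i j hij
    rcases lt_or_gt_of_ne hij with h | h
    · exact hPdisj0 i j h
    · exact (hPdisj0 j i h).symm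
  have hPunion : (⋃ i, P i) = Set.Icc (0:ℝ) 1 := by
    apply Set.Subset.antisymm
    · exact Set.iUnion_subset hP01
    · intro t ht
      obtain ⟨ht0, ht1⟩ := ht
      have htn0 : 0 ≤ t * n := by positivity
      rcases lt_or_ge (⌊t * n⌋₊) (n - 1) with h | h
      · refine Set.mem_iUnion.mpr ⟨⌊t * n⌋₊, ?_⟩
        rw [hP]
        dsimp only
        rw [if_pos (by omega)]
        constructor
        · rw [ha]
          dsimp only
          rw [div_le_iff₀ hnR]
          exact Nat.floor_le htn0
        · rw [ha]
          dsimp only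
          rw [lt_div_iff₀ hnR]
          push_cast
          exact Nat.lt_floor_add_one (t * n)
      · refine Set.mem_iUnion.mpr ⟨n - 1, ?_⟩
        rw [hP]
        dsimp only
        rw [if_neg (by omega), if_pos (by omega)]
        refine ⟨?_, ht1⟩
        rw [ha]
        dsimp only
        rw [div_le_iff₀ hnR]
        exact le_trans (Nat.cast_le.mpr h) (Nat.floor_le htn0)
  have hPvol : ∀ i, i + 1 ≤ n → (volume (P i)).toReal = (n:ℝ)⁻¹ := by
    intro i hi
    by_cases h1 : i + 1 < n
    · rw [hP]
      dsimp only
      rw [if_pos h1, Real.volume_Ico,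
        ENNReal.toReal_ofReal (by linarith [ha_mono i (i+1) (by omega)]), ← hgap i]
    · have h2 : i + 1 = n := by omega
      rw [hP]
      dsimp only
      rw [if_neg h1, if_pos h2, Real.volume_Icc,
        ENNReal.toReal_ofReal (by linarith [ha_le1 i (by omega)])]
      have : a (i + 1) = 1 := by rw [h2, haN]
      rw [← this, hgap i]
  refine ⟨P, ⟨hPmeas, hPdisj, hPunion⟩, ?_⟩
  intro Γ hΓ hfine T hT
  obtain ⟨hΓm, hΓd, hΓu⟩ := hΓ
  choose pick hpick using hfine
  have hΓsub : ∀ j, Γ j ⊆ Set.Icc (0:ℝ) 1 := fun j => hΓu ▸ Set.subset_iUnion Γ j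
  have hΓfin : ∀ j, volume (Γ j) ≠ ⊤ := by
    intro j
    refine (lt_of_le_of_lt (measure_mono (hΓsub j)) ?_).ne
    rw [Real.volume_Icc]
    exact ENNReal.ofReal_lt_top
  set c : ℕ → ℝ := fun j => (volume (Γ j)).toReal with hc
  have hc0 : ∀ j, 0 ≤ c j := fun j => ENNReal.toReal_nonneg
  have hΓtot : ∑' j, volume (Γ j) = 1 := by
    rw [← measure_iUnion hΓd hΓm, hΓu, Real.volume_Icc]
    norm_num
  have hsum_c : Summable c := by
    apply ENNReal.summable_toReal
    rw [hΓtot]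
    exact ENNReal.one_ne_top
  set C' : ℝ := max C 0 with hC'
  have hcne : ∀ j, c j ≠ 0 → (Γ j).Nonempty := by
    intro j hj
    rw [Set.nonempty_iff_ne_empty]
    intro h
    apply hj
    rw [hc]
    dsimp only
    rw [h, measure_empty]
    rfl
  have hfT : ∀ j, c j ≠ 0 → ‖f (T j)‖ ≤ C' := fun j hj =>
    le_trans (hbdd _ (hΓsub j (hT j (hcne j hj)))) (le_max_left _ _)
  have habs : Summable (fun j => c j * ‖f (T j)‖) := by
    refine Summable.of_nonneg_of_le (fun j => mul_nonneg (hc0 j) (norm_nonneg _))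
      (fun j => ?_) (hsum_c.mul_right C')
    by_cases hj : c j = 0
    · rw [hj]
      simp [mul_nonneg (le_max_right C 0)]
    · exact mul_le_mul_of_nonneg_left (hfT j hj) (hc0 j)
  have hsmul : Summable (fun j => c j • f (T j)) := by
    apply Summable.of_norm
    refine habs.congr fun j => ?_
    rw [norm_smul, Real.norm_eq_abs, abs_of_nonneg (hc0 j)]
  refine ⟨habs, ?_⟩
  set v : ℕ → X := fun i => ∑' j : (pick ⁻¹' {i} : Set ℕ), c j.1 • f (T j.1) with hv
  have hfib : HasSum v (∑' j, c j • f (T j)) := hsmul.hasSum.tsum_fiberwise pick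
  have hfiber_set : ∀ i, P i = ⋃ j : (pick ⁻¹' {i} : Set ℕ), Γ j.1 := by
    intro i
    apply Set.Subset.antisymm
    · intro t ht
      have ht01 : t ∈ Set.Icc (0:ℝ) 1 := hP01 i ht
      rw [← hΓu] at ht01
      obtain ⟨j, hj⟩ := Set.mem_iUnion.mp ht01
      have hpj : pick j = i := by
        by_contra hne'
        exact Set.disjoint_left.mp (hPdisj hne') (hpick j hj) ht
      exact Set.mem_iUnion.mpr ⟨⟨j, hpj⟩, hj⟩
    · apply Set.iUnion_subset
      intro j
      have hj : pick j.1 = i := j.2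
      exact Set.Subset.trans (hpick j.1) (by rw [hj])
  have hfiber_vol : ∀ i, i < n → ∑' j : (pick ⁻¹' {i} : Set ℕ), c j.1 = (n:ℝ)⁻¹ := by
    intro i hi
    have h1 : volume (P i) = ∑' j : (pick ⁻¹' {i} : Set ℕ), volume (Γ j.1) := by
      rw [hfiber_set i]
      exact measure_iUnion (fun j k hjk => hΓd (fun h => hjk (Subtype.ext h)))
        (fun j => hΓm j.1)
    have h2 : (volume (P i)).toReal = ∑' j : (pick ⁻¹' {i} : Set ℕ), c j.1 := by
      rw [h1]
      exact ENNReal.tsum_toReal_eq (fun j => hΓfin j.1)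
    rw [← h2, hPvol i (by omega)]
  have hsmul_eq : ∀ (i : ℕ) (j : (pick ⁻¹' {i} : Set ℕ)),
      c j.1 • f (T j.1) = ((n:ℝ) * c j.1) • ((n:ℝ)⁻¹ • f (T j.1)) := by
    intro i j
    rw [smul_smul]
    congr 1
    field_simp
  have hvmem : ∀ i, i < n →
      v i ∈ closure (convexHull ℝ ((fun t => (n:ℝ)⁻¹ • f t) '' P i)) := by
    intro i hi
    have hveq : v i = ∑' j : (pick ⁻¹' {i} : Set ℕ),
        ((n:ℝ) * c j.1) • ((n:ℝ)⁻¹ • f (T j.1)) := tsum_congr (hsmul_eq i)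
    rw [hveq]
    refine tsum_mem_closure_convexHull
      (M := (n:ℝ)⁻¹ * C')
      (fun j => mul_nonneg hnR.le (hc0 j.1))
      ((hsum_c.subtype _).mul_left _)
      (by rw [tsum_mul_left, hfiber_vol i hi, mul_inv_cancel₀ hnR.ne'])
      (fun j hj => ?_) (fun j hj => ?_) ?_
    · have hcj : c j.1 ≠ 0 := by
        intro h
        apply hj
        rw [h, mul_zero]
      have hTj : T j.1 ∈ P i := by
        have h1 := hpick j.1 (hT j.1 (hcne j.1 hcj))
        have h2 : pick j.1 = i := j.2
        rwa [h2] at h1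
      exact ⟨T j.1, hTj, rfl⟩
    · have hcj : c j.1 ≠ 0 := by
        intro h
        apply hj
        rw [h, mul_zero]
      rw [norm_smul, Real.norm_eq_abs, abs_of_nonneg (by positivity)]
      exact mul_le_mul_of_nonneg_left (hfT j.1 hcj) (by positivity)
    · exact (hsmul.subtype _).congr fun j => hsmul_eq i j
  have hvzero : ∀ i, i ∉ Finset.range n → v i = 0 := by
    intro i hi
    rw [Finset.mem_range, not_lt] at hi
    have hPe : P i = ∅ := by
      rw [hP]
      dsimp only
      rw [if_neg (by omega), if_neg (by omega)]
    have hzero : ∀ j : (pick ⁻¹' {i} : Set ℕ), c j.1 • f (T j.1) = 0 := by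
      rintro ⟨j, hj⟩
      rw [Set.mem_preimage, Set.mem_singleton_iff] at hj
      have h1 : Γ j ⊆ P i := hj ▸ hpick j
      have h2 : Γ j = ∅ := Set.subset_empty_iff.mp (hPe ▸ h1)
      rw [hc]
      dsimp only
      rw [h2, measure_empty]
      simp
    rw [hv]
    dsimp only
    rw [tsum_congr hzero, tsum_zero]
  have hfin : HasSum v (∑ i ∈ Finset.range n, v i) := hasSum_sum_of_ne_finset_zero hvzero
  have hEq : RLSum volume f Γ T = ∑ i ∈ Finset.range n, v i := hfib.unique hfin
  have hRbound : ∀ d : ℕ → X, (∀ i, i < n → d i ∈ (fun t => (n:ℝ)⁻¹ • f t) '' P i) →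
      ‖(∑ i ∈ Finset.range n, d i) - x‖ ≤ ε / 2 := by
    intro d hd
    simp only [Set.mem_image] at hd
    choose! t htP htd using hd
    have hmain := hRie n a t (by rw [ha]; simp) haN (fun i hi => ha_mono i (i+1) (by omega))
      (fun i hi => by rw [hgap i]; exact hmesh)
      (fun i hi => hPsub i (by omega) (htP i hi))
    have hsums : ∑ i ∈ Finset.range n, d i
        = ∑ i ∈ Finset.range n, (a (i+1) - a i) • f (t i) := by
      refine Finset.sum_congr rfl fun i hi => ?_
      rw [Finset.mem_range] at hi
      rw [← htd i hi, hgap i]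
    rw [hsums]
    exact hmain.le
  have hfinal := sum_closure_convexHull_bound n
    (fun i => (fun t => (n:ℝ)⁻¹ • f t) '' P i) x (ε/2) hRbound v hvmem
  rw [hEq]
  linarith [hfinal]
end

section
/- Let (Ω, Σ, μ) be a finite measure space, X a Banach space, and let f : Ω → X be Bochner-integrable. Then f is RL-integrable and its RL integral equals its Bochner integral. -/
open MeasureTheory Set Pointwise

/-!
Replace `f` by a strongly measurable `g` with separable range that agrees with `f` off a
measurable null set `N`. Covering the range of `g` by countably many balls of radius `δ / 2`
and making the preimages disjoint gives a partition of `Ω` whose pieces are either contained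
in `N` or carry an oscillation of `f` at most `δ`; every finer partition inherits this. On such
a piece `Δ`, `‖μ(Δ) • f(t) - ∫_Δ f‖ ≤ δ μ(Δ)`, and summing over the pieces bounds the distance
from the RL sum to the Bochner integral by `δ μ(Ω)`.
-/

section

variable {Ω X : Type*} [MeasurableSpace Ω]

theorem exists_isRLPartition_forall_subset {ι : Type*} [Countable ι] [Nonempty ι]
    {F : ι → Set Ω} (hF : ∀ i, MeasurableSet (F i)) :
    ∃ P : ℕ → Set Ω, IsRLPartition (⋃ i, F i) P ∧ ∀ n, ∃ i, P n ⊆ F i := by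
  obtain ⟨e, he⟩ := exists_surjective_nat ι
  refine ⟨disjointed (F ∘ e), ⟨MeasurableSet.disjointed fun n => hF (e n),
    disjoint_disjointed _, ?_⟩, fun n => ⟨e n, disjointed_subset _ n⟩⟩
  rw [iUnion_disjointed]
  exact he.iUnion_comp F

theorem MeasureTheory.AEStronglyMeasurable.exists_isRLPartition_null_or_dist_le
    [PseudoMetricSpace X] {μ : Measure Ω} {f : Ω → X} (hf : AEStronglyMeasurable f μ)
    {δ : ℝ} (hδ : 0 < δ) :
    ∃ P : ℕ → Set Ω, IsRLPartition univ P ∧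
      ∀ n, μ (P n) = 0 ∨ ∀ s ∈ P n, ∀ t ∈ P n, dist (f s) (f t) ≤ δ := by
  borelize X
  set g := hf.mk f
  obtain ⟨D, hDc, hD⟩ := hf.stronglyMeasurable_mk.isSeparable_range
  have : Countable D := hDc.to_subtype
  set N := toMeasurable μ {ω | f ω ≠ g ω}
  have hN : μ N = 0 := by
    rw [measure_toMeasurable]
    exact ae_iff.mp hf.ae_eq_mk
  have hfg : ∀ ω ∉ N, f ω = g ω := fun ω hω => not_not.mp fun h => hω (subset_toMeasurable _ _ h)
  let F : Option D → Set Ω := fun o => o.elim N fun x => g ⁻¹' Metric.ball x (δ / 2) \ N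
  have hF : ∀ o, MeasurableSet (F o) := by
    rintro (_ | x)
    · exact measurableSet_toMeasurable _ _
    · exact (hf.stronglyMeasurable_mk.measurable Metric.isOpen_ball.measurableSet).diff
        (measurableSet_toMeasurable _ _)
  have hcover : (⋃ o, F o) = univ := by
    refine eq_univ_of_forall fun ω => ?_
    by_cases hω : ω ∈ N
    · exact mem_iUnion.mpr ⟨none, hω⟩
    · obtain ⟨x, hxD, hx⟩ :=
        Metric.mem_closure_iff.mp (hD (mem_range_self ω)) (δ / 2) (by positivity)
      exact mem_iUnion.mpr ⟨some ⟨x, hxD⟩, Metric.mem_ball.mpr hx, hω⟩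
  obtain ⟨P, hP, hPF⟩ := exists_isRLPartition_forall_subset hF
  rw [hcover] at hP
  refine ⟨P, hP, fun n => ?_⟩
  obtain ⟨_ | x, hx⟩ := hPF n
  · exact .inl (measure_mono_null hx hN)
  · refine .inr fun s hs t ht => ?_
    obtain ⟨hsx, hsN⟩ := hx hs
    obtain ⟨htx, htN⟩ := hx ht
    rw [hfg s hsN, hfg t htN]
    linarith [dist_triangle_right (g s) (g t) x, Metric.mem_ball.mp hsx, Metric.mem_ball.mp htx]

variable [NormedAddCommGroup X] [NormedSpace ℝ X] {μ : Measure Ω} {f : Ω → X}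

theorem norm_measureReal_smul_sub_setIntegral_le [CompleteSpace X] {A : Set Ω} {t : Ω} {δ : ℝ}
    (hμA : μ A ≠ ⊤) (hf : IntegrableOn f A μ)
    (hA : μ A = 0 ∨ ∀ s ∈ A, ∀ s' ∈ A, dist (f s) (f s') ≤ δ) (ht : A.Nonempty → t ∈ A) :
    ‖μ.real A • f t - ∫ s in A, f s ∂μ‖ ≤ δ * μ.real A := by
  by_cases h0 : μ A = 0
  · simp [measureReal_def, h0, Measure.restrict_eq_zero.mpr h0]
  have htA : t ∈ A := ht (nonempty_of_measure_ne_zero h0)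
  have hosc := hA.resolve_left h0
  rw [← setIntegral_const, ← integral_sub (integrableOn_const (C := f t) hμA) hf]
  exact norm_setIntegral_le_of_norm_le_const hμA.lt_top fun s hs =>
    (dist_eq_norm (f t) (f s)).symm ▸ hosc t htA s hs

namespace IsRLPartition

variable {A : Set Ω} {Γ : ℕ → Set Ω}

theorem hasSum_measureReal (hΓ : IsRLPartition A Γ) (hμA : μ A ≠ ⊤) :
    HasSum (fun j => μ.real (Γ j)) (μ.real A) := by
  obtain ⟨hm, hd, hU⟩ := hΓ
  have hsum := measure_iUnion hd hm (μ := μ)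
  rw [hU] at hsum
  rw [measureReal_def, hsum, ENNReal.tsum_toReal_eq fun j => ?_]
  · exact ENNReal.summable_toReal (hsum ▸ hμA) |>.hasSum
  · exact ne_top_of_le_ne_top hμA (hU ▸ subset_iUnion Γ j |> measure_mono)

theorem hasSum_setIntegral (hΓ : IsRLPartition A Γ) (hf : IntegrableOn f A μ) :
    HasSum (fun j => ∫ s in Γ j, f s ∂μ) (∫ s in A, f s ∂μ) := by
  obtain ⟨hm, hd, hU⟩ := hΓ
  subst hU
  exact hasSum_integral_iUnion hm hd hf

variable {T : ℕ → Ω} {δ : ℝ}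

theorem rlSumAbsConv_of_norm_sub_le (hΓ : IsRLPartition A Γ) (hμA : μ A ≠ ⊤)
    (hf : IntegrableOn f A μ)
    (hT : ∀ j, ‖μ.real (Γ j) • f (T j) - ∫ s in Γ j, f s ∂μ‖ ≤ δ * μ.real (Γ j)) :
    RLSumAbsConv μ f Γ T := by
  have hbound : ∀ j, μ.real (Γ j) * ‖f (T j)‖ ≤ δ * μ.real (Γ j) + ∫ s in Γ j, ‖f s‖ ∂μ := by
    intro j
    calc μ.real (Γ j) * ‖f (T j)‖ = ‖μ.real (Γ j) • f (T j)‖ := by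
          rw [norm_smul, Real.norm_of_nonneg measureReal_nonneg]
      _ ≤ δ * μ.real (Γ j) + ‖∫ s in Γ j, f s ∂μ‖ := norm_le_norm_sub_add _ _ |>.trans
          (add_le_add (hT j) le_rfl)
      _ ≤ δ * μ.real (Γ j) + ∫ s in Γ j, ‖f s‖ ∂μ := by
          gcongr
          exact norm_integral_le_integral_norm _
  exact Summable.of_nonneg_of_le (fun j => mul_nonneg measureReal_nonneg (norm_nonneg _)) hbound
    (((hΓ.hasSum_measureReal hμA).mul_left δ).add (hΓ.hasSum_setIntegral hf.norm)).summable

theorem norm_rlSum_sub_setIntegral_le [CompleteSpace X] (hΓ : IsRLPartition A Γ) (hμA : μ A ≠ ⊤)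
    (hf : IntegrableOn f A μ)
    (hT : ∀ j, ‖μ.real (Γ j) • f (T j) - ∫ s in Γ j, f s ∂μ‖ ≤ δ * μ.real (Γ j)) :
    ‖RLSum μ f Γ T - ∫ s in A, f s ∂μ‖ ≤ δ * μ.real A := by
  have hδΓ := (hΓ.hasSum_measureReal hμA).mul_left δ
  have hdiff := Summable.of_norm_bounded hδΓ.summable hT
  have hRL : RLSum μ f Γ T = ∑' j, (μ.real (Γ j) • f (T j) - ∫ s in Γ j, f s ∂μ) +
      ∫ s in A, f s ∂μ := by
    change ∑' j, μ.real (Γ j) • f (T j) = _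
    simpa using (hdiff.hasSum.add (hΓ.hasSum_setIntegral hf)).tsum_eq
  rw [hRL, add_sub_cancel_right]
  exact tsum_of_norm_bounded hδΓ hT

end IsRLPartition

end

/-- A Bochner-integrable function `f : Ω → X` is RL-integrable and its RL
integral equals its Bochner integral. -/
theorem hasRLIntegral_of_bochner
    {Ω X : Type*} [MeasurableSpace Ω] [NormedAddCommGroup X] [NormedSpace ℝ X] [CompleteSpace X]
    (μ : Measure Ω) [IsFiniteMeasure μ] (f : Ω → X) (hf : Integrable f μ) :
    HasRLIntegral μ f Set.univ (∫ ω, f ω ∂μ) := by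
  intro ε hε
  set m := μ.real univ
  set δ := ε / (m + 1)
  have hδm : δ * m < ε := by
    rw [div_mul_eq_mul_div, div_lt_iff₀ (by positivity)]
    nlinarith
  obtain ⟨P, hP, hPosc⟩ := hf.1.exists_isRLPartition_null_or_dist_le (δ := δ) (by positivity)
  refine ⟨P, hP, fun Γ hΓ hΓP T hT => ?_⟩
  have hterm : ∀ j, ‖μ.real (Γ j) • f (T j) - ∫ s in Γ j, f s ∂μ‖ ≤ δ * μ.real (Γ j) := by
    intro j
    obtain ⟨n, hjn⟩ := hΓP j
    refine norm_measureReal_smul_sub_setIntegral_le (measure_ne_top μ _) hf.integrableOn ?_ (hT j)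
    exact (hPosc n).imp (measure_mono_null hjn) fun h s hs s' hs' => h s (hjn hs) s' (hjn hs')
  have hf' : IntegrableOn f univ μ := hf.integrableOn
  refine ⟨hΓ.rlSumAbsConv_of_norm_sub_le (measure_ne_top μ _) hf' hterm, ?_⟩
  rw [← setIntegral_univ]
  exact (hΓ.norm_rlSum_sub_setIntegral_le (measure_ne_top μ _) hf' hterm).trans_lt hδm
end

section
/- Let μ be Lebesgue measure on [0,1] and define f : [0,1] → L∞[0,1] by f(s) = the equivalence class of the characteristic function χ_{[s,1]}. Then for every Borel set A ⊆ [0,1], f is RL-integrable over A and its RL integral over A is the element of L∞[0,1] represented by the function t ↦ μ(A ∩ [0,t]). -/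
open MeasureTheory Set Pointwise

/-- Lebesgue measure on `[0,1]`. -/
noncomputable abbrev leb01 : Measure ℝ := volume.restrict (Set.Icc (0:ℝ) 1)

/-- The function `f : [0,1] → L∞[0,1]`, `f s = χ_{[s,1]}` (as an element of `L∞`). -/
noncomputable def stepFn (s : ℝ) : Lp ℝ ⊤ leb01 :=
  MemLp.toLp ((Set.Icc s 1).indicator fun _ => (1:ℝ))
    (memLp_top_of_bound
      ((measurable_const.indicator measurableSet_Icc).aestronglyMeasurable) 1
      (Filter.Eventually.of_forall fun t => by
        by_cases h : t ∈ Set.Icc s 1 <;> simp [Set.indicator_apply, h]))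

/-! At almost every `t ∈ [0,1]` the RL sum `∑ⱼ μ(Γⱼ) χ_{[Tⱼ,1]}` takes the value
`μ(⋃_{Tⱼ ≤ t} Γⱼ)` (a norm-summable series in `L∞` converges a.e. pointwise). Once `Γ` refines
the grid of mesh `δ`, every piece lies within `δ` of its sampling point, so this union, like
`A ∩ [0,t]`, is squeezed between `A ∩ (-∞, t-δ]` and `A ∩ (-∞, t+δ]`. Hence the RL sum is
within `2δ` of `t ↦ μ(A ∩ [0,t])` in `L∞`. -/

open Filter Topology

namespace MeasureTheory.Lp

variable {α E : Type*} [MeasurableSpace α] {μ : Measure α} [NormedAddCommGroup E]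

theorem ae_norm_le_norm_top (f : Lp E ⊤ μ) : ∀ᵐ x ∂μ, ‖f x‖ ≤ ‖f‖ := by
  filter_upwards [ae_le_eLpNormEssSup (μ := μ) (f := (f : α → E))] with x hx
  have hfin : eLpNormEssSup f μ ≠ ⊤ := by rw [← eLpNorm_exponent_top]; exact Lp.eLpNorm_ne_top f
  simpa [Lp.norm_def, eLpNorm_exponent_top] using ENNReal.toReal_mono hfin hx

theorem coeFn_finset_sum {ι : Type*} {p : ENNReal} (s : Finset ι) (F : ι → Lp E p μ) :
    ⇑(∑ i ∈ s, F i) =ᵐ[μ] ∑ i ∈ s, ⇑(F i) := by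
  classical
  induction s using Finset.induction_on with
  | empty => simpa using Lp.coeFn_zero E p μ
  | insert i s hi ih =>
    simp only [Finset.sum_insert hi]
    filter_upwards [Lp.coeFn_add (F i) (∑ j ∈ s, F j), ih] with x hadd hs
    simp only [hadd, Pi.add_apply, hs]

theorem ae_hasSum_of_summable_norm [CompleteSpace E] {F : ℕ → Lp E ⊤ μ}
    (hF : Summable fun j => ‖F j‖) : ∀ᵐ x ∂μ, HasSum (fun j => F j x) ((∑' j, F j) x) := by
  set S := ∑' j, F j
  have hS : Tendsto (fun N => ∑ j ∈ Finset.range N, F j) atTop (𝓝 S) :=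
    hF.of_norm.hasSum.tendsto_sum_nat
  filter_upwards [ae_all_iff.2 fun j => ae_norm_le_norm_top (F j),
    ae_all_iff.2 fun N => coeFn_finset_sum (Finset.range N) F,
    ae_all_iff.2 fun N => Lp.coeFn_sub (∑ j ∈ Finset.range N, F j) S,
    ae_all_iff.2 fun N => ae_norm_le_norm_top (∑ j ∈ Finset.range N, F j - S)]
    with x hFx hsumx hsubx hnormx
  rw [(hF.of_norm_bounded hFx).hasSum_iff_tendsto_nat, tendsto_iff_norm_sub_tendsto_zero]
  refine squeeze_zero (fun _ => norm_nonneg _) (fun N => ?_)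
    (tendsto_iff_norm_sub_tendsto_zero.1 hS)
  calc ‖∑ j ∈ Finset.range N, F j x - S x‖ = ‖(∑ j ∈ Finset.range N, F j - S) x‖ := by
        rw [hsubx N, Pi.sub_apply, hsumx N, Finset.sum_apply]
    _ ≤ _ := hnormx N

end MeasureTheory.Lp

section Partitions

variable {α : Type*} [MeasurableSpace α] {μ : Measure α} [IsFiniteMeasure μ]

theorem hasSum_measureReal_iUnion {ι : Type*} [Countable ι] {P : ι → Set α}
    (hm : ∀ i, MeasurableSet (P i)) (hd : Pairwise (Function.onFun Disjoint P)) :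
    HasSum (fun i => μ.real (P i)) (μ.real (⋃ i, P i)) := by
  have h := ENNReal.hasSum_toReal (f := fun i => μ (P i))
    (by rw [← measure_iUnion hd hm]; finiteness)
  rwa [← ENNReal.tsum_toReal_eq fun _ => measure_ne_top _ _, ← measure_iUnion hd hm] at h

theorem IsRLPartition.hasSum_measureReal_biUnion {A : Set α} {P : ℕ → Set α}
    (hP : IsRLPartition A P) (J : Set ℕ) :
    HasSum (J.indicator fun j => μ.real (P j)) (μ.real (⋃ j ∈ J, P j)) := by
  rw [← hasSum_subtype_iff_indicator, biUnion_eq_iUnion]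
  exact hasSum_measureReal_iUnion (fun j => hP.1 j)
    (hP.2.1.comp_of_injective Subtype.val_injective)

theorem IsRLPartition.rlSumAbsConv {X : Type*} [NormedAddCommGroup X] {A : Set α}
    {P : ℕ → Set α} (hP : IsRLPartition A P) {f : α → X} {C : ℝ} (hf : ∀ s, ‖f s‖ ≤ C)
    (T : ℕ → α) : RLSumAbsConv μ f P T := by
  have hsum : Summable fun i => μ.real (P i) := (hasSum_measureReal_iUnion hP.1 hP.2.1).summable
  refine (hsum.mul_right C).of_nonneg_of_le (fun i => by positivity) fun i => ?_
  exact mul_le_mul_of_nonneg_left (hf (T i)) measureReal_nonneg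

end Partitions

theorem abs_measureReal_sub_le_of_subset {α : Type*} [MeasurableSpace α] {μ : Measure α}
    [IsFiniteMeasure μ] {a b U V : Set α} (haU : a ⊆ U) (hUb : U ⊆ b) (haV : a ⊆ V)
    (hVb : V ⊆ b) : |μ.real U - μ.real V| ≤ μ.real (b \ a) := by
  have hdiff : μ.real b - μ.real a ≤ μ.real (b \ a) := le_measureReal_sdiff
  rw [abs_sub_le_iff]
  constructor <;> linarith [measureReal_mono (μ := μ) haU, measureReal_mono (μ := μ) hUb,
    measureReal_mono (μ := μ) haV, measureReal_mono (μ := μ) hVb]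

theorem abs_measureReal_biUnion_sub_le {μ : Measure ℝ} [IsFiniteMeasure μ] {A : Set ℝ}
    {Γ : ℕ → Set ℝ} {T : ℕ → ℝ} {δ : ℝ} (hΓ : ⋃ j, Γ j = A) (hδ : 0 ≤ δ)
    (hball : ∀ j, Γ j ⊆ Metric.ball (T j) δ) (t : ℝ) :
    |μ.real (⋃ j ∈ {j | T j ≤ t}, Γ j) - μ.real (A ∩ Iic t)| ≤ μ.real (Ioc (t - δ) (t + δ)) := by
  have hdist : ∀ j, ∀ y ∈ Γ j, y - δ < T j ∧ T j < y + δ := fun j y hy => by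
    have := hball j hy
    rw [Metric.mem_ball, Real.dist_eq, abs_lt] at this
    constructor <;> linarith
  refine (abs_measureReal_sub_le_of_subset (a := A ∩ Iic (t - δ)) (b := A ∩ Iic (t + δ))
    ?_ ?_ ?_ ?_).trans (measureReal_mono ?_)
  · rintro y ⟨hyA, hyt⟩
    rw [← hΓ] at hyA
    obtain ⟨j, hj⟩ := mem_iUnion.1 hyA
    exact mem_biUnion (show T j ≤ t by linarith [mem_Iic.1 hyt, (hdist j y hj).2]) hj
  · intro y hy
    obtain ⟨j, hjt, hj⟩ := mem_iUnion₂.1 hy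
    exact ⟨hΓ ▸ mem_iUnion_of_mem j hj,
      mem_Iic.2 (by linarith [show T j ≤ t from hjt, (hdist j y hj).1])⟩
  · exact inter_subset_inter_right _ (Iic_subset_Iic.2 (by linarith))
  · exact inter_subset_inter_right _ (Iic_subset_Iic.2 (by linarith))
  · rintro y ⟨⟨hyA, hyt⟩, hy⟩
    exact ⟨not_le.1 fun h => hy ⟨hyA, h⟩, hyt⟩

def gridPartition (A : Set ℝ) (δ : ℝ) (k : ℕ) : Set ℝ :=
  A ∩ Ico (k * δ) ((k + 1) * δ)

theorem isRLPartition_gridPartition {A : Set ℝ} {δ : ℝ} (hA : MeasurableSet A)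
    (hA0 : A ⊆ Ici 0) (hδ : 0 < δ) : IsRLPartition A (gridPartition A δ) := by
  have hmono : Monotone fun k : ℕ => (k : ℝ) * δ := fun k l hkl =>
    mul_le_mul_of_nonneg_right (Nat.cast_le.2 hkl) hδ.le
  have hunbdd : ¬BddAbove (range fun k : ℕ => (k : ℝ) * δ) := by
    rintro ⟨M, hM⟩
    obtain ⟨k, hk⟩ := exists_nat_gt (M / δ)
    have := hM ⟨k, rfl⟩
    rw [div_lt_iff₀ hδ] at hk
    linarith
  refine ⟨fun k => hA.inter measurableSet_Ico, fun k l hkl => ?_, ?_⟩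
  · have := hmono.pairwise_disjoint_on_Ico_succ hkl
    simp only [Function.onFun, Order.succ_eq_add_one, Nat.cast_add, Nat.cast_one] at this
    exact this.mono inter_subset_right inter_subset_right
  · have hcover := iUnion_Ico_map_succ_eq_Ici (fun k => hmono bot_le) hunbdd
    simp only [Order.succ_eq_add_one, Nat.cast_add, Nat.cast_one, Nat.bot_eq_zero,
      Nat.cast_zero, zero_mul] at hcover
    simp only [gridPartition, ← inter_iUnion, hcover]
    exact inter_eq_left.2 hA0

theorem IsFinerPartition.subset_ball_of_gridPartition {A : Set ℝ} {δ : ℝ} {Γ : ℕ → Set ℝ}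
    {T : ℕ → ℝ} (hfine : IsFinerPartition Γ (gridPartition A δ)) (hT : IsSampling Γ T) (j : ℕ) :
    Γ j ⊆ Metric.ball (T j) δ := by
  intro y hy
  obtain ⟨i, hi⟩ := hfine j
  have hyi := (hi hy).2
  have hTi := (hi (hT j ⟨y, hy⟩)).2
  rw [Metric.mem_ball, Real.dist_eq, abs_lt]
  constructor <;> linarith [hyi.1, hyi.2, hTi.1, hTi.2]

theorem coeFn_stepFn (s : ℝ) : ⇑(stepFn s) =ᵐ[leb01] (Icc s 1).indicator fun _ => (1 : ℝ) :=
  MemLp.coeFn_toLp _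

theorem norm_stepFn_le (s : ℝ) : ‖stepFn s‖ ≤ 1 := by
  refine (Lp.norm_le_of_ae_bound zero_le_one ?_).trans_eq (by simp)
  filter_upwards [coeFn_stepFn s] with t ht
  rw [ht]
  exact (norm_indicator_le_norm_self _ _).trans_eq norm_one

theorem IsRLPartition.ae_rlSum_stepFn_eq {A : Set ℝ} {Γ : ℕ → Set ℝ}
    (hΓ : IsRLPartition A Γ) (T : ℕ → ℝ) :
    ∀ᵐ t ∂leb01, RLSum leb01 stepFn Γ T t = leb01.real (⋃ j ∈ {j | T j ≤ t}, Γ j) := by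
  have hF : Summable fun j => ‖leb01.real (Γ j) • stepFn (T j)‖ :=
    (hΓ.rlSumAbsConv norm_stepFn_le T).congr fun j => by
      rw [norm_smul, Real.norm_of_nonneg measureReal_nonneg]; rfl
  filter_upwards [Lp.ae_hasSum_of_summable_norm hF,
    ae_all_iff.2 fun j => Lp.coeFn_smul (leb01.real (Γ j)) (stepFn (T j)),
    ae_all_iff.2 fun j => coeFn_stepFn (T j), ae_restrict_mem measurableSet_Icc]
    with t hsum hsmul hstep ht
  have hterm : (fun j => (leb01.real (Γ j) • stepFn (T j)) t) =
      {j | T j ≤ t}.indicator fun j => leb01.real (Γ j) := by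
    funext j
    rw [hsmul j, Pi.smul_apply, hstep j, smul_eq_mul]
    by_cases hj : T j ≤ t <;> simp [hj, ht.2]
  rw [hterm] at hsum
  exact hsum.unique (hΓ.hasSum_measureReal_biUnion _)

theorem memLp_top_measureReal_inter_Icc {A : Set ℝ} (hA1 : A ⊆ Icc 0 1) :
    MemLp (fun t => volume.real (A ∩ Icc 0 t)) ⊤ leb01 := by
  have hfin : ∀ t, volume (A ∩ Icc 0 t) ≠ ⊤ := fun t =>
    ((measure_mono (inter_subset_left.trans hA1)).trans_lt measure_Icc_lt_top).ne
  have hmono : Monotone fun t => volume.real (A ∩ Icc 0 t) := fun s t hst =>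
    measureReal_mono (inter_subset_inter_right _ (Icc_subset_Icc_right hst)) (hfin t)
  refine memLp_top_of_bound hmono.measurable.aestronglyMeasurable 1
    (Eventually.of_forall fun t => ?_)
  rw [Real.norm_of_nonneg measureReal_nonneg]
  calc volume.real (A ∩ Icc 0 t) ≤ volume.real (Icc (0 : ℝ) 1) :=
        measureReal_mono (inter_subset_left.trans hA1) measure_Icc_lt_top.ne
    _ = 1 := by simp

theorem volume_real_inter_Icc_eq_leb01_real {A : Set ℝ} (hA1 : A ⊆ Icc 0 1) (t : ℝ) :
    volume.real (A ∩ Icc 0 t) = leb01.real (A ∩ Iic t) := by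
  have h : A ∩ Icc 0 t = A ∩ Iic t := by
    ext y
    exact ⟨fun ⟨hy, _, h⟩ => ⟨hy, h⟩, fun ⟨hy, h⟩ => ⟨hy, (hA1 hy).1, h⟩⟩
  rw [h, Measure.real, Measure.real, Measure.restrict_eq_self _ (inter_subset_left.trans hA1)]

theorem leb01_real_Ioc_le_sub {a b : ℝ} (hab : a ≤ b) : leb01.real (Ioc a b) ≤ b - a := by
  calc leb01.real (Ioc a b) ≤ volume.real (Ioc a b) :=
        ENNReal.toReal_mono measure_Ioc_lt_top.ne (Measure.restrict_apply_le _ _)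
    _ = b - a := Real.volume_real_Ioc_of_le hab

/-- For every Borel set `A ⊆ [0,1]`, the function `s ↦ χ_{[s,1]}` is
RL-integrable over `A` (w.r.t. Lebesgue measure on `[0,1]`), and its RL integral over `A`
is the element of `L∞[0,1]` represented by `t ↦ μ(A ∩ [0,t])`. -/
theorem stepFn_hasRLIntegral (A : Set ℝ) (hA : MeasurableSet A) (hA1 : A ⊆ Set.Icc (0:ℝ) 1) :
    ∃ x : Lp ℝ ⊤ leb01, HasRLIntegral leb01 stepFn A x ∧
      ⇑x =ᵐ[leb01] fun t => (volume (A ∩ Set.Icc (0:ℝ) t)).toReal := by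
  have hg := memLp_top_measureReal_inter_Icc hA1
  refine ⟨hg.toLp _, fun ε hε => ?_, hg.coeFn_toLp⟩
  have hδ : 0 < ε / 4 := by positivity
  refine ⟨gridPartition A (ε / 4), isRLPartition_gridPartition hA (fun x hx => (hA1 hx).1) hδ,
    fun Γ hΓ hfine T hT => ⟨hΓ.rlSumAbsConv norm_stepFn_le T, ?_⟩⟩
  have hball := hfine.subset_ball_of_gridPartition hT
  have hae : ∀ᵐ t ∂leb01, ‖(RLSum leb01 stepFn Γ T - hg.toLp _) t‖ ≤ 2 * (ε / 4) := by
    filter_upwards [hΓ.ae_rlSum_stepFn_eq T, Lp.coeFn_sub (RLSum leb01 stepFn Γ T) (hg.toLp _),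
      hg.coeFn_toLp] with t hS hsub hx
    rw [hsub, Pi.sub_apply, hS, hx, Real.norm_eq_abs, volume_real_inter_Icc_eq_leb01_real hA1]
    refine (abs_measureReal_biUnion_sub_le hΓ.2.2 hδ.le hball t).trans ?_
    exact (leb01_real_Ioc_le_sub (by linarith)).trans_eq (by ring)
  calc ‖RLSum leb01 stepFn Γ T - hg.toLp _‖ ≤ 2 * (ε / 4) :=
        (Lp.norm_le_of_ae_bound (by positivity) hae).trans_eq (by simp)
    _ < ε := by linarith
end

section
/- Let μ be Lebesgue measure on [0,1]. There is no Bochner-integrable function g : [0,1] → L∞[0,1] such that for every Borel set A ⊆ [0,1], the Bochner integral (Bochner)∫_A g dμ equals the element of L∞[0,1] represented by the function t ↦ μ(A ∩ [0,t]). -/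
open MeasureTheory Set Pointwise

/-!
Integrating an `L∞[0,1]` function over `[p, q]` is a continuous linear functional of norm at most
`q - p`. Commuting it with the Bochner integrals over all Borel sets `A` and applying Fubini to
`μ(A ∩ [0, t])` shows that it takes the value `μ([p, q] ∩ [s, ∞))` at `g s` for almost every `s`.
Doing this for all rational intervals at once, for almost all `s < s'` an interval
`[r, r'] ⊆ (s, s')` gives `r' - r ≤ (r' - r) ‖g s - g s'‖`. Hence `g` is `1`-separated on a conull
subset of `[0, 1]`, which is uncountable, whereas a Bochner-integrable function is almost
everywhere separably valued.
-/

open scoped ENNReal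

namespace Metric

theorem IsSeparated.countable_of_isSeparable {X : Type*} [PseudoEMetricSpace X] {ε : ℝ≥0∞}
    {s : Set X} (hε : ε ≠ 0) (hsep : IsSeparated ε s) (hs : TopologicalSpace.IsSeparable s) :
    s.Countable := by
  obtain ⟨c, hc, hsc⟩ := hs
  have hnear : ∀ x ∈ s, ∃ y ∈ c, edist x y < ε / 2 := fun x hx =>
    EMetric.mem_closure_iff.1 (hsc hx) _ (ENNReal.half_pos hε)
  choose! d hdc hd using hnear
  refine Set.MapsTo.countable_of_injOn hdc (fun x hx y hy hxy => ?_) hc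
  by_contra hne
  refine (hsep hx hy hne).not_ge ?_
  calc edist x y ≤ edist x (d x) + edist (d y) y := by
        rw [hxy]; exact edist_triangle _ _ _
    _ ≤ ε / 2 + ε / 2 := by
        rw [edist_comm (d y)]; exact add_le_add (hd x hx).le (hd y hy).le
    _ = ε := ENNReal.add_halves ε

end Metric

namespace MeasureTheory

theorem AEStronglyMeasurable.eq_zero_of_pairwise_lt_edist {α X : Type*} {m : MeasurableSpace α}
    {μ : Measure α} [NullSingletonClass μ] [PseudoEMetricSpace X] {f : α → X}
    (hf : AEStronglyMeasurable f μ) {S : Set α} (hS : ∀ᵐ x ∂μ, x ∈ S) {ε : ℝ≥0∞} (hε : ε ≠ 0)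
    (hsep : S.Pairwise fun x y => ε < edist (f x) (f y)) : μ = 0 := by
  obtain ⟨f', hf', hff'⟩ := hf
  set T := S ∩ {x | f x = f' x}
  have hT : ∀ᵐ x ∂μ, x ∈ T := hS.and hff'
  have hsepT : T.Pairwise fun x y => ε < edist (f' x) (f' y) := fun x hx y hy hne => by
    show ε < edist (f' x) (f' y)
    rw [← show f x = f' x from hx.2, ← show f y = f' y from hy.2]
    exact hsep hx.1 hy.1 hne
  have hinj : InjOn f' T := fun x hx y hy hxy => by
    by_contra hne
    simpa [hxy] using hsepT hx hy hne
  have hsepImage : Metric.IsSeparated ε (f' '' T) := by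
    rintro _ ⟨x, hx, rfl⟩ _ ⟨y, hy, rfl⟩ hne
    exact hsepT hx hy (ne_of_apply_ne f' hne)
  have hTc : T.Countable := (mapsTo_image f' T).countable_of_injOn hinj
    (hsepImage.countable_of_isSeparable hε (hf'.isSeparable_range.mono (image_subset_range _ _)))
  refine ae_eq_bot.1 (Filter.eventually_false_iff_eq_bot.1 ?_)
  filter_upwards [hT, measure_eq_zero_iff_ae_notMem.1 (hTc.measure_zero μ)] with x hx hx'
  exact hx' hx

end MeasureTheory

namespace MeasureTheory.Lp

variable {α E : Type*} {m : MeasurableSpace α} {μ : Measure α}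
  [NormedAddCommGroup E]

theorem ae_norm_le_norm_of_top (f : Lp E ∞ μ) : ∀ᵐ x ∂μ, ‖f x‖ ≤ ‖f‖ := by
  have hfin : eLpNormEssSup f μ ≠ ∞ := by
    rw [← eLpNorm_exponent_top]; exact Lp.eLpNorm_ne_top f
  filter_upwards [enorm_ae_le_eLpNormEssSup f μ] with x hx
  simpa [Lp.norm_def, eLpNorm_exponent_top] using ENNReal.toReal_mono hfin hx

variable [NormedSpace ℝ E]

theorem norm_setIntegral_le_of_top (f : Lp E ∞ μ) {s : Set α} (hs : μ s < ∞) :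
    ‖∫ x in s, f x ∂μ‖ ≤ μ.real s * ‖f‖ :=
  mul_comm ‖f‖ _ ▸ norm_setIntegral_le_of_norm_le_const_ae hs
    (ae_restrict_of_ae (ae_norm_le_norm_of_top f))

variable [IsFiniteMeasure μ]

variable (μ) in
noncomputable def setIntegralCLM (s : Set α) : Lp E ∞ μ →L[ℝ] E :=
  LinearMap.mkContinuous
    { toFun := fun f => ∫ x in s, f x ∂μ
      map_add' := fun f g => by
        have hint (f : Lp E ∞ μ) : IntegrableOn f s μ :=
          ((Lp.memLp f).integrable le_top).integrableOn
        rw [← integral_add (hint f) (hint g)]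
        exact integral_congr_ae (ae_restrict_of_ae (Lp.coeFn_add f g))
      map_smul' := fun c f => by
        rw [RingHom.id_apply, ← integral_smul]
        exact integral_congr_ae (ae_restrict_of_ae (Lp.coeFn_smul c f)) }
    (μ.real s) fun f => norm_setIntegral_le_of_top f (measure_lt_top μ s)

theorem setIntegralCLM_apply (s : Set α) (f : Lp E ∞ μ) :
    setIntegralCLM μ s f = ∫ x in s, f x ∂μ := rfl

theorem one_le_norm_sub_of_setIntegralCLM_eq {s : Set α} (hs : 0 < μ.real s)
    {f g : Lp ℝ ∞ μ} (hf : setIntegralCLM μ s f = μ.real s) (hg : setIntegralCLM μ s g = 0) :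
    1 ≤ ‖f - g‖ := by
  have hle := norm_setIntegral_le_of_top (f - g) (measure_lt_top μ s)
  rw [← setIntegralCLM_apply, map_sub, hf, hg, sub_zero, Real.norm_of_nonneg hs.le] at hle
  exact (le_mul_iff_one_le_right hs).1 hle

end MeasureTheory.Lp

namespace MeasureTheory

variable {α : Type*} [MeasurableSpace α] [TopologicalSpace α] [LinearOrder α]
  [OrderClosedTopology α] [BorelSpace α] {μ : Measure α}

theorem integrable_measureReal_inter_Ici [IsFiniteMeasure μ] (B : Set α) :
    Integrable (fun s => μ.real (B ∩ Ici s)) μ := by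
  have hanti : Antitone fun s => μ.real (B ∩ Ici s) := fun s s' h =>
    measureReal_mono (inter_subset_inter_right _ (Ici_subset_Ici.2 h))
  refine Integrable.of_bound hanti.measurable.aestronglyMeasurable (μ.real univ)
    (ae_of_all _ fun s => ?_)
  rw [Real.norm_of_nonneg measureReal_nonneg]
  exact measureReal_mono (subset_univ _)

variable [SecondCountableTopology α]

/-- Both sides are `(μ.prod μ) {(t, s) | t ∈ B, s ∈ A, s ≤ t}`. -/
theorem lintegral_measure_inter_Iic_eq [SFinite μ] (A B : Set α) :
    ∫⁻ t in B, μ (A ∩ Iic t) ∂μ = ∫⁻ s in A, μ (B ∩ Ici s) ∂μ := by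
  have hIic (t : α) : μ (A ∩ Iic t) = ∫⁻ s in A, (if s ≤ t then 1 else 0) ∂μ := by
    rw [inter_comm, ← Measure.restrict_apply measurableSet_Iic,
      ← lintegral_indicator_one measurableSet_Iic]
    simp only [indicator_apply, mem_Iic, Pi.one_apply]
  have hIci (s : α) : μ (B ∩ Ici s) = ∫⁻ t in B, (if s ≤ t then 1 else 0) ∂μ := by
    rw [inter_comm, ← Measure.restrict_apply measurableSet_Ici,
      ← lintegral_indicator_one measurableSet_Ici]
    simp only [indicator_apply, mem_Ici, Pi.one_apply]
  simp only [hIic, hIci]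
  exact lintegral_lintegral_swap ((Measurable.ite (measurableSet_le measurable_snd measurable_fst)
    measurable_const measurable_const).aemeasurable)

theorem integral_measureReal_inter_Iic_eq [IsFiniteMeasure μ] (A B : Set α) :
    ∫ t in B, μ.real (A ∩ Iic t) ∂μ = ∫ s in A, μ.real (B ∩ Ici s) ∂μ := by
  have hmono : Monotone fun t => μ (A ∩ Iic t) := fun t t' h =>
    measure_mono (inter_subset_inter_right _ (Iic_subset_Iic.2 h))
  have hanti : Antitone fun s => μ (B ∩ Ici s) := fun s s' h =>
    measure_mono (inter_subset_inter_right _ (Ici_subset_Ici.2 h))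
  simp only [measureReal_def]
  rw [integral_toReal hmono.measurable.aemeasurable (ae_of_all _ fun _ => measure_lt_top _ _),
    integral_toReal hanti.measurable.aemeasurable (ae_of_all _ fun _ => measure_lt_top _ _),
    lintegral_measure_inter_Iic_eq]

theorem ae_setIntegralCLM_eq_measureReal_inter_Ici [IsFiniteMeasure μ] {g : α → Lp ℝ ∞ μ}
    (hg : Integrable g μ)
    (hg_int : ∀ A, MeasurableSet A → ⇑(∫ s in A, g s ∂μ) =ᵐ[μ] fun t => μ.real (A ∩ Iic t))
    (B : Set α) : ∀ᵐ s ∂μ, Lp.setIntegralCLM μ B (g s) = μ.real (B ∩ Ici s) := by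
  refine ae_eq_of_forall_setIntegral_eq_of_sigmaFinite
    (fun A _ _ => ((Lp.setIntegralCLM μ B).integrable_comp hg).integrableOn)
    (fun A _ _ => (integrable_measureReal_inter_Ici B).integrableOn) fun A hA _ => ?_
  calc ∫ s in A, Lp.setIntegralCLM μ B (g s) ∂μ
      = Lp.setIntegralCLM μ B (∫ s in A, g s ∂μ) :=
        (Lp.setIntegralCLM μ B).integral_comp_comm hg.integrableOn
    _ = ∫ t in B, μ.real (A ∩ Iic t) ∂μ := integral_congr_ae (ae_restrict_of_ae (hg_int A hA))
    _ = ∫ s in A, μ.real (B ∩ Ici s) ∂μ := integral_measureReal_inter_Iic_eq A B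

end MeasureTheory

theorem setIntegral_ae_eq_measureReal_inter_Iic {g : ℝ → Lp ℝ ∞ leb01}
    (hrep : ∀ A : Set ℝ, MeasurableSet A → A ⊆ Icc 0 1 →
      ⇑(∫ s in A, g s ∂leb01) =ᵐ[leb01] fun t => (volume (A ∩ Icc 0 t)).toReal)
    {A : Set ℝ} (hA : MeasurableSet A) :
    ⇑(∫ s in A, g s ∂leb01) =ᵐ[leb01] fun t => leb01.real (A ∩ Iic t) := by
  have hA01 : leb01.restrict (A ∩ Icc 0 1) = leb01.restrict A := by
    rw [Measure.restrict_restrict hA, Measure.restrict_restrict (hA.inter measurableSet_Icc),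
      inter_assoc, inter_self]
  have hvol (t : ℝ) : volume (A ∩ Icc 0 1 ∩ Icc 0 t) = leb01 (A ∩ Iic t) := by
    rw [Measure.restrict_apply' measurableSet_Icc]
    congr 1
    ext u
    simp only [mem_inter_iff, mem_Icc, mem_Iic]
    tauto
  simpa only [hA01, hvol, measureReal_def] using
    hrep _ (hA.inter measurableSet_Icc) inter_subset_right

theorem one_le_norm_sub_of_setIntegralCLM_Icc_eq {x y : Lp ℝ ∞ leb01} {s s' : ℝ} (hs : 0 ≤ s)
    (hs' : s' ≤ 1) (hlt : s < s')
    (hx : ∀ r r' : ℚ, Lp.setIntegralCLM leb01 (Icc r r') x = leb01.real (Icc r r' ∩ Ici s))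
    (hy : ∀ r r' : ℚ, Lp.setIntegralCLM leb01 (Icc r r') y = leb01.real (Icc r r' ∩ Ici s')) :
    1 ≤ ‖x - y‖ := by
  obtain ⟨r, hsr, hr⟩ := exists_rat_btwn hlt
  obtain ⟨r', hrr', hr's'⟩ := exists_rat_btwn hr
  have hlen : leb01.real (Icc (r : ℝ) r') = r' - r := by
    rw [measureReal_restrict_apply measurableSet_Icc,
      inter_eq_left.2 (Icc_subset_Icc (by linarith) (by linarith)),
      Real.volume_real_Icc_of_le hrr'.le]
  refine Lp.one_le_norm_sub_of_setIntegralCLM_eq (s := Icc (r : ℝ) r') (by linarith) ?_ ?_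
  · have hsub : Icc (r : ℝ) r' ⊆ Ici s := fun u hu => hsr.le.trans hu.1
    rw [hx, inter_eq_left.2 hsub]
  · have hdisj : Icc (r : ℝ) r' ∩ Ici s' = ∅ :=
      eq_empty_of_forall_notMem fun u hu => (hu.1.2.trans_lt hr's').not_ge hu.2
    rw [hy, hdisj, measureReal_empty]

/-- There is no Bochner-integrable function `g : [0,1] → L∞[0,1]` whose Bochner
integral over every Borel set `A ⊆ [0,1]` is the element of `L∞[0,1]` represented by
`t ↦ μ(A ∩ [0,t])`. -/
theorem no_bochner_antiderivative :
    ¬ ∃ g : ℝ → Lp ℝ ⊤ leb01, Integrable g leb01 ∧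
        ∀ A : Set ℝ, MeasurableSet A → A ⊆ Set.Icc (0:ℝ) 1 →
          ⇑(∫ s in A, g s ∂leb01) =ᵐ[leb01]
            fun t => (volume (A ∩ Set.Icc (0:ℝ) t)).toReal := by
  rintro ⟨g, hg, hrep⟩
  have hae : ∀ᵐ s ∂leb01, s ∈ Icc 0 1 ∧ ∀ r r' : ℚ,
      Lp.setIntegralCLM leb01 (Icc r r') (g s) = leb01.real (Icc r r' ∩ Ici s) :=
    (ae_restrict_mem measurableSet_Icc).and <| ae_all_iff.2 fun _ => ae_all_iff.2 fun _ =>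
      ae_setIntegralCLM_eq_measureReal_inter_Ici hg
        (fun _ hA => setIntegral_ae_eq_measureReal_inter_Iic hrep hA) _
  have hzero : leb01 = 0 := by
    refine hg.aestronglyMeasurable.eq_zero_of_pairwise_lt_edist hae (ε := 2⁻¹) (by norm_num) ?_
    rintro s ⟨hs01, hs⟩ s' ⟨hs'01, hs'⟩ hne
    suffices h : 1 ≤ ‖g s - g s'‖ by
      refine lt_of_lt_of_le (b := 1) (by norm_num) ?_
      rw [edist_dist, dist_eq_norm, ← ENNReal.ofReal_one]
      exact ENNReal.ofReal_le_ofReal h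
    rcases hne.lt_or_gt with h | h
    · exact one_le_norm_sub_of_setIntegralCLM_Icc_eq hs01.1 hs'01.2 h hs hs'
    · rw [norm_sub_rev]
      exact one_le_norm_sub_of_setIntegralCLM_Icc_eq hs'01.1 hs01.2 h hs' hs
  simpa using Measure.restrict_eq_zero.1 hzero
end
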